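/- For every integer n ≥ 2 and every integer m with N_n ≤ m < N_{n+1}, one has R(m) ≤ R(N_n), where R(k) = Ψ(k)/(k·log log k). -/

import Mathlib

open Finset Real Filter

/-- Dedekind psi function `Ψ(n) = n ∏_{p ∣ n} (1 + 1/p)`. -/
noncomputable def dedekindPsi (n : ℕ) : ℝ := n * ∏ p ∈ n.primeFactors, (1 + 1/(p:ℝ))

/-- `nthPrime n` is the n-th prime `p_n` (1-indexed: `nthPrime 1 = 2`). -/
noncomputable def nthPrime (n : ℕ) : ℕ := Nat.nth Nat.Prime (n - 1)

/-- `primorialN k = N_k`, the product of the first `k` primes. -/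
noncomputable def primorialN (k : ℕ) : ℕ := ∏ i ∈ Finset.range k, Nat.nth Nat.Prime i
/-- `R k = Ψ(k)/(k log log k)`. -/
noncomputable def Rratio (k : ℕ) : ℝ := dedekindPsi k / (k * Real.log (Real.log k))

/-!
Write `R(k) = P(k) / log log k` with `P(k) = ∏_{p ∣ k} (1 + 1/p)`. A number with `j` distinct
prime factors is at least `N_j`, so `m < N_{n+1}` has at most `n` of them. Since `1 + 1/p`
decreases in `p`, `P(m)` is then at most the product over the first `n` primes, which is
`P(N_n)`; and `log log m ≥ log log N_n > 0` because `N_n ≥ 6 > e`.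
-/

namespace Nat

variable {p : ℕ → Prop}

theorem nth_card_le_of_forall_lt (hp : (Set.ofPred p).Infinite) {S : Finset ℕ} {a : ℕ}
    (hS : ∀ x ∈ S, p x) (ha : p a) (hlt : ∀ x ∈ S, x < a) : nth p #S ≤ a := by
  classical
  have hcount : #S ≤ count p a := by
    rw [count_eq_card_filter_range]
    exact card_le_card fun x hx => mem_filter.2 ⟨mem_range.2 (hlt x hx), hS x hx⟩
  calc nth p #S ≤ nth p (count p a) := (nth_le_nth hp).2 hcount
    _ = a := nth_count ha

/-- The `i`-th smallest element of `S ⊆ {x | p x}` is at least `nth p i`. -/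
theorem prod_range_card_nth_le_prod {R : Type*} [CommSemiring R] [PartialOrder R]
    [IsOrderedRing R] (hp : (Set.ofPred p).Infinite) {f : ℕ → R} (hf₀ : 0 ≤ f)
    (hf : MonotoneOn f (Set.ofPred p)) {S : Finset ℕ} (hS : ∀ x ∈ S, p x) :
    ∏ i ∈ range #S, f (nth p i) ≤ ∏ x ∈ S, f x := by
  classical
  induction S using Finset.induction_on_max with
  | empty => simp
  | insert a S hlt ih =>
    have haS : a ∉ S := fun h => (hlt a h).false
    have hSp : ∀ x ∈ S, p x := fun x hx => hS x (mem_insert_of_mem hx)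
    have hap : p a := hS a (mem_insert_self a S)
    rw [card_insert_of_notMem haS, prod_range_succ, prod_insert haS, mul_comm (f a)]
    exact mul_le_mul (ih hSp)
      (hf (nth_mem_of_infinite hp _) hap (nth_card_le_of_forall_lt hp hSp hap hlt))
      (hf₀ _) (prod_nonneg fun x _ => hf₀ x)

end Nat

theorem primorialN_card_le_prod {S : Finset ℕ} (hS : ∀ p ∈ S, p.Prime) :
    primorialN #S ≤ ∏ p ∈ S, p :=
  Nat.prod_range_card_nth_le_prod Nat.infinite_setOfPred_prime (fun _ => Nat.zero_le _)
    monotoneOn_id hS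

theorem prod_one_add_inv_le_prod_range_card {S : Finset ℕ} (hS : ∀ p ∈ S, p.Prime) :
    ∏ p ∈ S, (1 + 1 / (p : ℝ)) ≤
      ∏ i ∈ range #S, (1 + 1 / (Nat.nth Nat.Prime i : ℝ)) := by
  have hmono : MonotoneOn (fun x : ℕ => (1 + 1 / (x : ℝ))⁻¹) (Set.ofPred Nat.Prime) := by
    intro a ha b _ hab
    have ha₀ : (0 : ℝ) < a := Nat.cast_pos.2 (Nat.Prime.pos ha)
    exact inv_anti₀ (by positivity)
      (add_le_add_right (one_div_le_one_div_of_le ha₀ (Nat.cast_le.2 hab)) 1)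
  have h := Nat.prod_range_card_nth_le_prod Nat.infinite_setOfPred_prime
    (fun x => by positivity) hmono hS
  simp only [prod_inv_distrib] at h
  exact (inv_le_inv₀ (by positivity) (by positivity)).1 h

theorem primorialN_monotone : Monotone primorialN := fun _ _ hab =>
  prod_le_prod_of_subset_of_one_le' (range_subset_range.2 hab)
    fun i _ _ => (Nat.prime_nth_prime i).one_le

theorem primorialN_pos (n : ℕ) : 0 < primorialN n :=
  prod_pos fun i _ => (Nat.prime_nth_prime i).pos

theorem primorialN_two : primorialN 2 = 6 := by
  simp [primorialN, prod_range_succ, Nat.nth_prime_zero_eq_two, Nat.nth_prime_one_eq_three]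

theorem prod_primeFactors_primorialN {M : Type*} [CommMonoid M] (f : ℕ → M) (n : ℕ) :
    ∏ p ∈ (primorialN n).primeFactors, f p = ∏ i ∈ range n, f (Nat.nth Nat.Prime i) := by
  have hinj : Set.InjOn (Nat.nth Nat.Prime) (range n) :=
    (Nat.nth_injective Nat.infinite_setOfPred_prime).injOn
  have hprime : ∀ p ∈ (range n).image (Nat.nth Nat.Prime), p.Prime := by
    simp [Nat.prime_nth_prime]
  have hN : primorialN n = ∏ p ∈ (range n).image (Nat.nth Nat.Prime), p := by
    rw [primorialN, prod_image hinj]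
  rw [hN, Nat.primeFactors_prod hprime, prod_image hinj]

theorem card_primeFactors_le_of_lt_primorialN {m n : ℕ} (hm : m < primorialN (n + 1)) :
    #m.primeFactors ≤ n := by
  rcases eq_or_ne m 0 with rfl | hm₀
  · simp
  by_contra! h
  have := calc primorialN (n + 1)
      ≤ primorialN #m.primeFactors := primorialN_monotone h
    _ ≤ ∏ p ∈ m.primeFactors, p :=
        primorialN_card_le_prod fun _ => Nat.prime_of_mem_primeFactors
    _ ≤ m := Nat.le_of_dvd (Nat.pos_of_ne_zero hm₀) (Nat.prod_primeFactors_dvd m)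
  omega

theorem one_lt_log_primorialN {n : ℕ} (hn : 2 ≤ n) : 1 < log (primorialN n) := by
  have h6 : (6 : ℝ) ≤ primorialN n := by
    exact_mod_cast primorialN_two ▸ primorialN_monotone hn
  rw [lt_log_iff_exp_lt (by linarith)]
  linarith [exp_one_lt_d9]

theorem Rratio_eq {k : ℕ} (hk : k ≠ 0) :
    Rratio k = (∏ p ∈ k.primeFactors, (1 + 1 / (p : ℝ))) / log (log k) := by
  rw [Rratio, dedekindPsi, mul_div_mul_left _ _ (Nat.cast_ne_zero.2 hk)]

theorem R_le_R_primorialN (n : ℕ) (hn : 2 ≤ n) (m : ℕ)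
    (h1 : primorialN n ≤ m) (h2 : m < primorialN (n+1)) :
    Rratio m ≤ Rratio (primorialN n) := by
  have hN := one_lt_log_primorialN hn
  have hm₀ : m ≠ 0 := (lt_of_lt_of_le (primorialN_pos n) h1).ne'
  rw [Rratio_eq hm₀, Rratio_eq (primorialN_pos n).ne']
  refine div_le_div₀ (prod_nonneg fun _ _ => by positivity) ?_ (log_pos hN) ?_
  · calc ∏ p ∈ m.primeFactors, (1 + 1 / (p : ℝ))
        ≤ ∏ i ∈ range #m.primeFactors, (1 + 1 / (Nat.nth Nat.Prime i : ℝ)) :=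
          prod_one_add_inv_le_prod_range_card fun _ => Nat.prime_of_mem_primeFactors
      _ ≤ ∏ i ∈ range n, (1 + 1 / (Nat.nth Nat.Prime i : ℝ)) :=
          prod_le_prod_of_subset_of_one_le
            (range_subset_range.2 (card_primeFactors_le_of_lt_primorialN h2))
            (fun _ _ => by positivity) (fun _ _ _ => by simp)
      _ = ∏ p ∈ (primorialN n).primeFactors, (1 + 1 / (p : ℝ)) :=
          (prod_primeFactors_primorialN (fun p : ℕ => 1 + 1 / (p : ℝ)) n).symm
  · have hlog : log (primorialN n) ≤ log m :=
      log_le_log (by exact_mod_cast primorialN_pos n) (by exact_mod_cast h1)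
    exact log_le_log (by linarith) hlog
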